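/- arXiv:1402.1599 — 3 statements merged into one kernel-verified Lean document; each statement's English description precedes it below -/
import Mathlib

section
/- If the equation x_{k+1} = A_k x_k is nonuniformly exponentially bounded, i.e., there exist constants K > 0, ε ≥ 1, a ≥ 1 with ‖Φ(k,l)‖ ≤ K a^{|k−l|} ε^l for all k, l ∈ ℤ, then Σ_NED(A) is a bounded closed set and Σ_NED(A) ⊆ [1/a, a]. -/
open Matrix

attribute [local instance] Matrix.linftyOpNormedAddCommGroup

abbrev Mat (N : ℕ) := Matrix (Fin N) (Fin N) ℝ

noncomputable def fundSolNat {N : ℕ} (A : ℤ → GL (Fin N) ℝ) : ℕ → GL (Fin N) ℝ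
  | 0 => 1
  | n + 1 => A (n : ℤ) * fundSolNat A n

noncomputable def fundSolNeg {N : ℕ} (A : ℤ → GL (Fin N) ℝ) : ℕ → GL (Fin N) ℝ
  | 0 => (A (-1))⁻¹
  | n + 1 => (A (Int.negSucc (n + 1)))⁻¹ * fundSolNeg A n

noncomputable def fundSol {N : ℕ} (A : ℤ → GL (Fin N) ℝ) : ℤ → GL (Fin N) ℝ
  | Int.ofNat n => fundSolNat A n
  | Int.negSucc n => fundSolNeg A n

/-- The evolution operator `Φ(k,l)` of `x_{k+1} = A_k x_k`. -/
noncomputable def evol {N : ℕ} (A : ℤ → GL (Fin N) ℝ) (k l : ℤ) : Mat N :=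
  ↑(fundSol A k * (fundSol A l)⁻¹)

def IsInvariantProjector {N : ℕ} (A : ℤ → GL (Fin N) ℝ) (P : ℤ → Mat N) : Prop :=
  (∀ k, P k * P k = P k) ∧ ∀ k, P (k + 1) * (A k : Mat N) = (A k : Mat N) * P k

/-- Evolution operator `Φ_γ(k,l) = γ^{-(k-l)} Φ(k,l)` of `x_{k+1} = (1/γ) A_k x_k`. -/
noncomputable def evolW {N : ℕ} (A : ℤ → GL (Fin N) ℝ) (γ : ℝ) (k l : ℤ) : Mat N :=
  γ ^ (l - k) • evol A k l

def NEDWith {N : ℕ} (A : ℤ → GL (Fin N) ℝ) (γ : ℝ) (P : ℤ → Mat N) (K α ε : ℝ) : Prop :=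
  IsInvariantProjector A P ∧ 1 ≤ K ∧ 0 < α ∧ α < 1 ∧ 1 ≤ ε ∧
    (∀ k l : ℤ, l ≤ k → ‖evolW A γ k l * P l‖ ≤ K * α ^ (k - l) * ε ^ l) ∧
    (∀ k l : ℤ, k ≤ l → ‖evolW A γ k l * (1 - P l)‖ ≤ K * (1 / α) ^ (k - l) * ε ^ l)

def HasNED {N : ℕ} (A : ℤ → GL (Fin N) ℝ) (γ : ℝ) : Prop :=
  ∃ P K α ε, NEDWith A γ P K α ε

def HasStrongNED {N : ℕ} (A : ℤ → GL (Fin N) ℝ) (γ : ℝ) : Prop :=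
  ∃ P K α ε, NEDWith A γ P K α ε ∧ α * ε ^ 2 < 1

def HasED {N : ℕ} (A : ℤ → GL (Fin N) ℝ) (γ : ℝ) : Prop :=
  ∃ P K α, NEDWith A γ P K α 1

def SigmaNED {N : ℕ} (A : ℤ → GL (Fin N) ℝ) : Set ℝ := {γ | 0 < γ ∧ ¬ HasStrongNED A γ}

def rhoNED {N : ℕ} (A : ℤ → GL (Fin N) ℝ) : Set ℝ := {γ | 0 < γ ∧ HasStrongNED A γ}

def SigmaED {N : ℕ} (A : ℤ → GL (Fin N) ℝ) : Set ℝ := {γ | 0 < γ ∧ ¬ HasED A γ}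

def stableSet {N : ℕ} (A : ℤ → GL (Fin N) ℝ) (γ ε : ℝ) (l : ℤ) : Set (Fin N → ℝ) :=
  {ξ | ∃ C : ℝ, ∀ k : ℤ, l ≤ k → ‖(evol A k l).mulVec ξ‖ * γ ^ (-k) * ε ^ (-l) ≤ C}

def unstableSet {N : ℕ} (A : ℤ → GL (Fin N) ℝ) (γ ε : ℝ) (l : ℤ) : Set (Fin N → ℝ) :=
  {ξ | ∃ C : ℝ, ∀ k : ℤ, k ≤ l → ‖(evol A k l).mulVec ξ‖ * γ ^ (-k) * ε ^ (-l) ≤ C}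

attribute [local instance] Matrix.linftyOpNormedSpace

private lemma evol_self {N : ℕ} (A : ℤ → GL (Fin N) ℝ) (l : ℤ) : evol A l l = 1 := by
  simp [evol]

private lemma zpow_mono_base {x y : ℝ} (hx : 0 ≤ x) (hxy : x ≤ y) {n : ℤ} (hn : 0 ≤ n) :
    x ^ n ≤ y ^ n := by
  obtain ⟨m, rfl⟩ := Int.eq_ofNat_of_zero_le hn
  rw [zpow_natCast, zpow_natCast]
  exact pow_le_pow_left₀ hx hxy m

private lemma evolW_scale {N : ℕ} (A : ℤ → GL (Fin N) ℝ) {γ : ℝ} (γ' : ℝ) (hγ : γ ≠ 0)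
    (k l : ℤ) : evolW A γ' k l = (γ' / γ) ^ (l - k) • evolW A γ k l := by
  unfold evolW
  rw [smul_smul]
  congr 1
  rw [div_zpow, div_mul_cancel₀]
  exact zpow_ne_zero _ hγ

private lemma hasStrongNED_of_dim_zero (A : ℤ → GL (Fin 0) ℝ) (γ : ℝ) : HasStrongNED A γ := by
  refine ⟨fun _ => 0, 1, 1/2, 1, ⟨⟨fun k => Subsingleton.elim _ _, fun k => Subsingleton.elim _ _⟩,
    le_refl 1, by norm_num, by norm_num, le_refl 1, ?_, ?_⟩, by norm_num⟩ <;>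
  · intro k l _
    rw [show (evolW A γ k l * _ : Mat 0) = 0 from Subsingleton.elim _ _, norm_zero]
    positivity

private lemma hasStrongNED_of_big {N : ℕ} (A : ℤ → GL (Fin N) ℝ) {K a γ : ℝ} (hK : 0 < K)
    (ha : 1 ≤ a) (hbd1 : ∀ k l : ℤ, ‖evol A k l‖ ≤ K * a ^ |k - l|) (hγ : a < γ) :
    HasStrongNED A γ := by
  have ha0 : (0:ℝ) < a := lt_of_lt_of_le one_pos ha
  have hγ0 : (0:ℝ) < γ := lt_trans ha0 hγ
  refine ⟨fun _ => 1, max K 1, a / γ, 1, ⟨⟨fun k => one_mul 1, fun k => by rw [one_mul, mul_one]⟩,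
    le_max_right K 1, div_pos ha0 hγ0, (div_lt_one hγ0).mpr hγ, le_refl 1, ?_, ?_⟩,
    by rw [one_pow, mul_one]; exact (div_lt_one hγ0).mpr hγ⟩
  · intro k l hlk
    have hkl : (0:ℤ) ≤ k - l := sub_nonneg.mpr hlk
    rw [mul_one, _root_.one_zpow, mul_one]
    have hnorm : ‖evolW A γ k l‖ = γ ^ (l - k) * ‖evol A k l‖ := by
      rw [evolW, norm_smul, Real.norm_eq_abs, abs_of_pos (zpow_pos hγ0 _)]
    rw [hnorm]
    have hb := hbd1 k l
    rw [abs_of_nonneg hkl] at hb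
    have h1 : γ ^ (l - k) * ‖evol A k l‖ ≤ γ ^ (l - k) * (K * a ^ (k - l)) :=
      mul_le_mul_of_nonneg_left hb (le_of_lt (zpow_pos hγ0 _))
    have h2 : γ ^ (l - k) * (K * a ^ (k - l)) = K * (a / γ) ^ (k - l) := by
      rw [div_zpow, show (l - k) = -(k - l) by ring, _root_.zpow_neg]
      field_simp
    have h3 : K * (a / γ) ^ (k - l) ≤ max K 1 * (a / γ) ^ (k - l) :=
      mul_le_mul_of_nonneg_right (le_max_left K 1) (le_of_lt (zpow_pos (div_pos ha0 hγ0) _))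
    linarith
  · intro k l _
    rw [sub_self, mul_zero, norm_zero, _root_.one_zpow, mul_one]
    have : (0:ℝ) < max K 1 * (1 / (a / γ)) ^ (k - l) :=
      mul_pos (lt_of_lt_of_le one_pos (le_max_right K 1))
        (zpow_pos (by rw [one_div]; exact inv_pos.mpr (div_pos ha0 hγ0)) _)
    linarith

private lemma hasStrongNED_of_small {N : ℕ} (A : ℤ → GL (Fin N) ℝ) {K a γ : ℝ} (hK : 0 < K)
    (ha : 1 ≤ a) (hbd1 : ∀ k l : ℤ, ‖evol A k l‖ ≤ K * a ^ |k - l|) (hγ0 : 0 < γ)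
    (hγ : γ < 1 / a) : HasStrongNED A γ := by
  have ha0 : (0:ℝ) < a := lt_of_lt_of_le one_pos ha
  have hγa : γ * a < 1 := (lt_div_iff₀ ha0).mp hγ
  refine ⟨fun _ => 0, max K 1, γ * a, 1, ⟨⟨fun k => mul_zero 0, fun k => by
    rw [zero_mul, mul_zero]⟩,
    le_max_right K 1, mul_pos hγ0 ha0, hγa, le_refl 1, ?_, ?_⟩,
    by rw [one_pow, mul_one]; exact hγa⟩
  · intro k l _
    rw [mul_zero, norm_zero, _root_.one_zpow, mul_one]
    have : (0:ℝ) < max K 1 * (γ * a) ^ (k - l) :=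
      mul_pos (lt_of_lt_of_le one_pos (le_max_right K 1)) (zpow_pos (mul_pos hγ0 ha0) _)
    linarith
  · intro k l hkl
    have hlk : (0:ℤ) ≤ l - k := sub_nonneg.mpr hkl
    rw [sub_zero, mul_one, _root_.one_zpow, mul_one]
    have hnorm : ‖evolW A γ k l‖ = γ ^ (l - k) * ‖evol A k l‖ := by
      rw [evolW, norm_smul, Real.norm_eq_abs, abs_of_pos (zpow_pos hγ0 _)]
    rw [hnorm]
    have hb := hbd1 k l
    rw [show |k - l| = l - k by rw [abs_sub_comm]; exact abs_of_nonneg hlk] at hb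
    have h1 : γ ^ (l - k) * ‖evol A k l‖ ≤ γ ^ (l - k) * (K * a ^ (l - k)) :=
      mul_le_mul_of_nonneg_left hb (le_of_lt (zpow_pos hγ0 _))
    have h2 : γ ^ (l - k) * (K * a ^ (l - k)) = K * (1 / (γ * a)) ^ (k - l) := by
      rw [one_div, _root_.inv_zpow, show (k - l) = -(l - k) by ring, _root_.zpow_neg, inv_inv,
        mul_zpow]
      ring
    have h3 : K * (1 / (γ * a)) ^ (k - l) ≤ max K 1 * (1 / (γ * a)) ^ (k - l) :=
      mul_le_mul_of_nonneg_right (le_max_left K 1)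
        (zpow_nonneg (by positivity) _)
    linarith

private lemma hasStrongNED_of_close {N : ℕ} (A : ℤ → GL (Fin N) ℝ) {γ γ' : ℝ} (hγ : 0 < γ)
    (hγ' : 0 < γ') {P : ℤ → Mat N} {K α ε : ℝ} (h : NEDWith A γ P K α ε)
    (h1 : α * ε ^ 2 * γ < γ') (h2 : γ' * (α * ε ^ 2) < γ) : HasStrongNED A γ' := by
  obtain ⟨hP, hK, hα, hα1, hε, hb1, hb2⟩ := h
  have hε0 : (0:ℝ) < ε := lt_of_lt_of_le one_pos hε
  have hεsq : (1:ℝ) ≤ ε ^ 2 := by nlinarith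
  set m : ℝ := max (γ / γ') (γ' / γ) with hm
  have hm0 : 0 < m := lt_of_lt_of_le (div_pos hγ hγ') (le_max_left _ _)
  have hmb : α * ε ^ 2 * m < 1 := by
    have hA : α * ε ^ 2 * (γ / γ') < 1 := by
      rw [mul_div_assoc']
      exact (div_lt_one hγ').mpr h1
    have hB : α * ε ^ 2 * (γ' / γ) < 1 := by
      rw [mul_div_assoc']
      rw [div_lt_one hγ]
      nlinarith
    rcases max_choice (γ / γ') (γ' / γ) with hc | hc <;> rw [hm, hc] <;> assumption
  have hαm1 : α * m < 1 := by nlinarith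
  refine ⟨P, K, α * m, ε, ⟨hP, hK, mul_pos hα hm0, hαm1, hε, ?_, ?_⟩, by nlinarith⟩
  · intro k l hlk
    have hkl : (0:ℤ) ≤ k - l := sub_nonneg.mpr hlk
    have key : ‖evolW A γ' k l * P l‖ = (γ / γ') ^ (k - l) * ‖evolW A γ k l * P l‖ := by
      rw [evolW_scale A γ' (ne_of_gt hγ), smul_mul_assoc, norm_smul, Real.norm_eq_abs,
        abs_of_pos (zpow_pos (div_pos hγ' hγ) _)]
      congr 1
      rw [show l - k = -(k - l) by ring, _root_.zpow_neg, ← _root_.inv_zpow, inv_div]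
    rw [key]
    have hb := hb1 k l hlk
    have h1' : (γ / γ') ^ (k - l) * ‖evolW A γ k l * P l‖ ≤
        (γ / γ') ^ (k - l) * (K * α ^ (k - l) * ε ^ l) :=
      mul_le_mul_of_nonneg_left hb (le_of_lt (zpow_pos (div_pos hγ hγ') _))
    have h2' : (γ / γ') ^ (k - l) * (K * α ^ (k - l) * ε ^ l) =
        K * (γ / γ' * α) ^ (k - l) * ε ^ l := by
      rw [mul_zpow]; ring
    have h3' : K * (γ / γ' * α) ^ (k - l) * ε ^ l ≤ K * (α * m) ^ (k - l) * ε ^ l := by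
      have hbase : γ / γ' * α ≤ α * m := by
        rw [mul_comm]
        exact mul_le_mul_of_nonneg_left (le_max_left _ _) (le_of_lt hα)
      have := zpow_mono_base (le_of_lt (mul_pos (div_pos hγ hγ') hα)) hbase hkl
      have hKnn : (0:ℝ) ≤ K := le_trans zero_le_one hK
      have hεl : (0:ℝ) ≤ ε ^ l := le_of_lt (zpow_pos hε0 _)
      apply mul_le_mul_of_nonneg_right _ hεl
      exact mul_le_mul_of_nonneg_left this hKnn
    linarith
  · intro k l hkl
    have hlk : (0:ℤ) ≤ l - k := sub_nonneg.mpr hkl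
    have key : ‖evolW A γ' k l * (1 - P l)‖ =
        (γ' / γ) ^ (l - k) * ‖evolW A γ k l * (1 - P l)‖ := by
      rw [evolW_scale A γ' (ne_of_gt hγ), smul_mul_assoc, norm_smul, Real.norm_eq_abs,
        abs_of_pos (zpow_pos (div_pos hγ' hγ) _)]
    rw [key]
    have hb := hb2 k l hkl
    have hflip : (1 / α) ^ (k - l) = α ^ (l - k) := by
      rw [one_div, _root_.inv_zpow, show (l - k) = -(k - l) by ring, _root_.zpow_neg]
    have hflip2 : (1 / (α * m)) ^ (k - l) = (α * m) ^ (l - k) := by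
      rw [one_div, _root_.inv_zpow, show (l - k) = -(k - l) by ring, _root_.zpow_neg]
    rw [hflip] at hb
    rw [hflip2]
    have h1' : (γ' / γ) ^ (l - k) * ‖evolW A γ k l * (1 - P l)‖ ≤
        (γ' / γ) ^ (l - k) * (K * α ^ (l - k) * ε ^ l) :=
      mul_le_mul_of_nonneg_left hb (le_of_lt (zpow_pos (div_pos hγ' hγ) _))
    have h2' : (γ' / γ) ^ (l - k) * (K * α ^ (l - k) * ε ^ l) =
        K * (γ' / γ * α) ^ (l - k) * ε ^ l := by
      rw [mul_zpow]; ring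
    have h3' : K * (γ' / γ * α) ^ (l - k) * ε ^ l ≤ K * (α * m) ^ (l - k) * ε ^ l := by
      have hbase : γ' / γ * α ≤ α * m := by
        rw [mul_comm]
        exact mul_le_mul_of_nonneg_left (le_max_right _ _) (le_of_lt hα)
      have := zpow_mono_base (le_of_lt (mul_pos (div_pos hγ' hγ) hα)) hbase hlk
      have hKnn : (0:ℝ) ≤ K := le_trans zero_le_one hK
      have hεl : (0:ℝ) ≤ ε ^ l := le_of_lt (zpow_pos hε0 _)
      apply mul_le_mul_of_nonneg_right _ hεl
      exact mul_le_mul_of_nonneg_left this hKnn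
    linarith

/-- If `x_{k+1} = A_k x_k` is nonuniformly exponentially bounded,
i.e. `‖Φ(k,l)‖ ≤ K a^{|k-l|} ε^l` for all `k, l`, then `Σ_NED(A)` is a bounded
closed set contained in `[1/a, a]`. -/
theorem sigmaNED_bounded_of_nonuniformly_bounded {N : ℕ} (A : ℤ → GL (Fin N) ℝ)
    (K ε a : ℝ) (hK : 0 < K) (hε : 1 ≤ ε) (ha : 1 ≤ a)
    (hbd : ∀ k l : ℤ, ‖evol A k l‖ ≤ K * a ^ |k - l| * ε ^ l) :
    Bornology.IsBounded (SigmaNED A) ∧ IsClosed (SigmaNED A) ∧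
      SigmaNED A ⊆ Set.Icc (1 / a) a := by
  have ha0 : (0:ℝ) < a := lt_of_lt_of_le one_pos ha
  have hsub : SigmaNED A ⊆ Set.Icc (1 / a) a := by
    rcases Nat.eq_zero_or_pos N with rfl | hN
    · intro γ hγ
      exact absurd (hasStrongNED_of_dim_zero A γ) hγ.2
    · have hone : (1:ℝ) ≤ ‖(1 : Mat N)‖ := by
        have h0 : (1 : Mat N) ≠ 0 := by
          intro h
          have h' := congrFun (congrFun h ⟨0, hN⟩) ⟨0, hN⟩
          simp [Matrix.one_apply] at h'
        have hpos : 0 < ‖(1 : Mat N)‖ := norm_pos_iff.mpr h0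
        have hmul : ‖(1 : Mat N)‖ ≤ ‖(1 : Mat N)‖ * ‖(1 : Mat N)‖ := by
          conv_lhs => rw [show (1 : Mat N) = 1 * 1 from (one_mul 1).symm]
          exact Matrix.linfty_opNorm_mul 1 1
        nlinarith
      have hε1 : ε = 1 := by
        rcases eq_or_lt_of_le hε with h | h
        · exact h.symm
        · exfalso
          have h1 : ∀ l : ℤ, (1:ℝ) ≤ K * ε ^ l := by
            intro l
            have hb := hbd l l
            rw [evol_self A l, sub_self, abs_zero, zpow_zero, mul_one] at hb
            linarith
          obtain ⟨n, hn⟩ := pow_unbounded_of_one_lt K h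
          have h2 := h1 (-(n:ℤ))
          rw [_root_.zpow_neg, zpow_natCast, ← div_eq_mul_inv,
            le_div_iff₀ (by positivity)] at h2
          linarith
      subst hε1
      have hbd1 : ∀ k l : ℤ, ‖evol A k l‖ ≤ K * a ^ |k - l| := by
        intro k l
        have hb := hbd k l
        rwa [_root_.one_zpow, mul_one] at hb
      intro γ hγ
      obtain ⟨hγ0, hns⟩ := hγ
      by_contra hmem
      rw [Set.mem_Icc, not_and_or, not_le, not_le] at hmem
      rcases hmem with h | h
      · exact hns (hasStrongNED_of_small A hK ha hbd1 hγ0 h)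
      · exact hns (hasStrongNED_of_big A hK ha hbd1 h)
  refine ⟨(Metric.isBounded_Icc (1 / a) a).subset hsub, ?_, hsub⟩
  rw [← isOpen_compl_iff, isOpen_iff_mem_nhds]
  intro γ hγ
  by_cases hlt : γ < 1 / a
  · refine Filter.mem_of_superset (Iio_mem_nhds hlt) ?_
    intro γ' h' hmem
    exact absurd (hsub hmem).1 (not_le.mpr h')
  by_cases hgt : a < γ
  · refine Filter.mem_of_superset (Ioi_mem_nhds hgt) ?_
    intro γ' h' hmem
    exact absurd (hsub hmem).2 (not_le.mpr h')
  push_neg at hlt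
  have hγ0 : 0 < γ := lt_of_lt_of_le (by positivity) hlt
  have hstrong : HasStrongNED A γ := by
    by_contra hns
    exact hγ ⟨hγ0, hns⟩
  obtain ⟨P, K', α, ε', hned, hstr⟩ := hstrong
  have hα : 0 < α := hned.2.2.1
  have hε' : 1 ≤ ε' := hned.2.2.2.2.1
  have hε'0 : 0 < ε' := lt_of_lt_of_le one_pos hε'
  have hβ0 : 0 < α * ε' ^ 2 := by positivity
  refine Filter.mem_of_superset (Ioo_mem_nhds (a := α * ε' ^ 2 * γ) (b := γ / (α * ε' ^ 2)) ?_ ?_)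
    ?_
  · nlinarith
  · rw [lt_div_iff₀ hβ0]; nlinarith
  · intro γ' h'
    obtain ⟨hl, hr⟩ := h'
    have hγ'0 : 0 < γ' := lt_trans (mul_pos hβ0 hγ0) hl
    intro hmem
    exact hmem.2 (hasStrongNED_of_close A hγ0 hγ'0 hned hl ((lt_div_iff₀ hβ0).mp hr))
end

section
/- Let ω > a > 0 and consider the planar diagonal system u_{k+1} = e^{−ω + ak(−1)^k − a(k−1)(−1)^{k−1}} u_k, v_{k+1} = e^{ω − ak(−1)^k + a(k−1)(−1)^{k−1}} v_k. Then this system does not admit an exponential dichotomy: there are no invariant projector P and constants K ≥ 1, 0 < α < 1 with ‖Φ(k,l)P_l‖ ≤ K α^{k−l} for k ≥ l and ‖Φ(k,l)(Id − P_l)‖ ≤ K (1/α)^{k−l} for k ≤ l. -/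
/-!
The evolution operator is diagonal, `Φ(k,l) = diag(e^{E k - E l}, e^{E l - E k})` with
`E k = -ω k + a (k-1) (-1)^(k-1)`. Since `a < ω`, `E` is bounded below on every half-line
`(-∞, l]`, so the unstable estimate `e^{E (l-n) - E l} |(1 - P l) 0 j| ≤ K α^n` forces the first
row of `1 - P l` to vanish, i.e. `P l 0 0 = 1`. The stable estimate over one step then gives
`e^{E (l+1) - E l} ≤ K α` for every `l`, whereas `E (2m+1) - E (2m) = 4am - ω - a` is unbounded.
-/

open Matrix

attribute [local instance] Matrix.linftyOpNormedAddCommGroup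

noncomputable def exExp (ω a : ℝ) (k : ℤ) : ℝ :=
  -ω + a * k * (-1 : ℝ) ^ k - a * (k - 1) * (-1 : ℝ) ^ (k - 1)

noncomputable def exSys (ω a : ℝ) (k : ℤ) : GL (Fin 2) ℝ :=
  Matrix.GeneralLinearGroup.mkOfDetNeZero
    (Matrix.diagonal ![Real.exp (exExp ω a k), Real.exp (-exExp ω a k)])
    (by
      rw [Matrix.det_diagonal]
      rw [Fin.prod_univ_two]
      simp only [Matrix.cons_val_zero, Matrix.cons_val_one, Matrix.head_cons]
      exact (mul_pos (Real.exp_pos _) (Real.exp_pos _)).ne')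


open Real Filter

theorem Matrix.norm_apply_le_linfty_opNorm {m n : Type*} [Fintype m] [Fintype n]
    (M : Matrix m n ℝ) (i : m) (j : n) : ‖M i j‖ ≤ ‖M‖ := by
  rw [← coe_nnnorm, ← coe_nnnorm, NNReal.coe_le_coe, linfty_opNNNorm_def]
  exact (Finset.single_le_sum (fun j _ => zero_le) (Finset.mem_univ j)).trans
    (Finset.le_sup (f := fun i => ∑ j, ‖M i j‖₊) (Finset.mem_univ i))

theorem eq_zero_of_forall_mul_abs_le_pow {c x K α : ℝ} (hc : 0 < c) (hα₀ : 0 ≤ α) (hα₁ : α < 1)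
    (h : ∀ n : ℕ, c * |x| ≤ K * α ^ n) : x = 0 := by
  have hlim : Tendsto (fun n : ℕ => K * α ^ n) atTop (nhds 0) := by
    simpa using (tendsto_pow_atTop_nhds_zero_of_lt_one hα₀ hα₁).const_mul K
  exact abs_nonpos_iff.mp (nonpos_of_mul_nonpos_right (ge_of_tendsto' hlim h) hc)

theorem fundSol_add_one {N : ℕ} (A : ℤ → GL (Fin N) ℝ) (k : ℤ) :
    fundSol A (k + 1) = A k * fundSol A k := by
  match k with
  | Int.ofNat n => rfl
  | Int.negSucc 0 => simp [fundSol, fundSolNeg, fundSolNat]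
  | Int.negSucc (n + 1) =>
    rw [show Int.negSucc (n + 1) + 1 = Int.negSucc n by omega]
    simp [fundSol, fundSolNeg]

def HasDiagonalPotential {N : ℕ} (A : ℤ → GL (Fin N) ℝ) (V : Fin N → ℤ → ℝ) : Prop :=
  ∀ k, (A k : Mat N) = diagonal fun i => exp (V i (k + 1) - V i k)

section DiagonalSystem

variable {N : ℕ} {A : ℤ → GL (Fin N) ℝ} {V : Fin N → ℤ → ℝ}

theorem coe_fundSol_of_diagonal (hA : HasDiagonalPotential A V) (k : ℤ) :
    (fundSol A k : Mat N) = diagonal fun i => exp (V i k - V i 0) := by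
  refine Int.inductionOn' k 0 (by simp [fundSol, fundSolNat]) (fun k _ ih => ?_) (fun k _ ih => ?_)
  · rw [fundSol_add_one, Units.val_mul, ih, hA, diagonal_mul_diagonal]
    simp only [← exp_add, sub_add_sub_cancel]
  · rw [← Units.mul_right_inj (A (k - 1)), ← Units.val_mul, ← fundSol_add_one, sub_add_cancel,
      ih, hA, diagonal_mul_diagonal]
    simp only [← exp_add, sub_add_cancel, sub_add_sub_cancel]

theorem evol_of_diagonal (hA : HasDiagonalPotential A V) (k l : ℤ) :
    evol A k l = diagonal fun i => exp (V i k - V i l) := by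
  have hinv : (↑(fundSol A l)⁻¹ : Mat N) = diagonal fun i => exp (V i 0 - V i l) := by
    refine Units.inv_eq_of_mul_eq_one_right ?_
    rw [coe_fundSol_of_diagonal hA, diagonal_mul_diagonal]
    simp [← exp_add]
  rw [evol, Units.val_mul, coe_fundSol_of_diagonal hA, hinv, diagonal_mul_diagonal]
  simp only [← exp_add, sub_add_sub_cancel]

end DiagonalSystem

theorem evolW_one {N : ℕ} (A : ℤ → GL (Fin N) ℝ) : evolW A 1 = evol A := by
  funext k l
  simp [evolW]

section ExponentialDichotomy

variable {N : ℕ} {A : ℤ → GL (Fin N) ℝ} {V : Fin N → ℤ → ℝ} {P : ℤ → Mat N} {K α : ℝ}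

theorem exp_mul_abs_le_norm_evol_mul (hA : HasDiagonalPotential A V) (k l : ℤ) (M : Mat N)
    (i j : Fin N) :
    exp (V i k - V i l) * |M i j| ≤ ‖evol A k l * M‖ := by
  calc exp (V i k - V i l) * |M i j| = ‖(evol A k l * M) i j‖ := by
        rw [evol_of_diagonal hA, diagonal_mul, Real.norm_eq_abs, abs_mul, abs_of_pos (exp_pos _)]
    _ ≤ ‖evol A k l * M‖ := norm_apply_le_linfty_opNorm _ i j

theorem NEDWith.exp_mul_abs_le_of_le
    (hA : HasDiagonalPotential A V) (h : NEDWith A 1 P K α 1) {k l : ℤ} (hlk : l ≤ k)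
    (i j : Fin N) :
    exp (V i k - V i l) * |P l i j| ≤ K * α ^ (k - l) := by
  obtain ⟨-, -, -, -, -, hstable, -⟩ := h
  have := hstable k l hlk
  rw [evolW_one, _root_.one_zpow, mul_one] at this
  exact (exp_mul_abs_le_norm_evol_mul hA k l _ i j).trans this

theorem NEDWith.exp_mul_abs_one_sub_le_of_le
    (hA : HasDiagonalPotential A V) (h : NEDWith A 1 P K α 1) {k l : ℤ} (hkl : k ≤ l)
    (i j : Fin N) :
    exp (V i k - V i l) * |(1 - P l) i j| ≤ K * (1 / α) ^ (k - l) := by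
  obtain ⟨-, -, -, -, -, -, hunstable⟩ := h
  have := hunstable k l hkl
  rw [evolW_one, _root_.one_zpow, mul_one] at this
  exact (exp_mul_abs_le_norm_evol_mul hA k l _ i j).trans this

theorem NEDWith.one_sub_apply_eq_zero_of_bddBelow
    (hA : HasDiagonalPotential A V) (h : NEDWith A 1 P K α 1) (l : ℤ) (i j : Fin N)
    (hV : BddBelow (V i '' Set.Iic l)) :
    (1 - P l) i j = 0 := by
  obtain ⟨c, hc⟩ := hV
  refine eq_zero_of_forall_mul_abs_le_pow (K := K) (exp_pos (c - V i l)) h.2.2.1.le h.2.2.2.1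
    fun n => ?_
  calc exp (c - V i l) * |(1 - P l) i j|
      ≤ exp (V i (l - n) - V i l) * |(1 - P l) i j| := by
        gcongr
        exact hc ⟨l - n, by simp, rfl⟩
    _ ≤ K * (1 / α) ^ (l - n - l) := h.exp_mul_abs_one_sub_le_of_le hA (by omega) i j
    _ = K * α ^ n := by simp [_root_.zpow_neg]

end ExponentialDichotomy

section Example

variable (ω a : ℝ)

noncomputable def exPotential (k : ℤ) : ℝ := -ω * k + a * (k - 1) * (-1 : ℝ) ^ (k - 1)

theorem exExp_eq_sub (k : ℤ) : exExp ω a k = exPotential ω a (k + 1) - exPotential ω a k := by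
  simp only [exExp, exPotential, add_sub_cancel_right]
  push_cast
  ring

theorem hasDiagonalPotential_exSys :
    HasDiagonalPotential (exSys ω a) ![exPotential ω a, -exPotential ω a] := by
  intro k
  rw [exSys, GeneralLinearGroup.val_mkOfDetNeZero, exExp_eq_sub]
  congr 1
  funext i
  fin_cases i <;> simp [neg_add_eq_sub]

theorem exExp_two_mul (m : ℤ) : exExp ω a (2 * m) = 4 * a * m - (ω + a) := by
  have hodd : Odd (2 * m - 1) := ⟨m - 1, by ring⟩
  simp only [exExp, (even_two_mul m).neg_one_zpow, hodd.neg_one_zpow]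
  push_cast
  ring

variable {ω a}

theorem bddBelow_exPotential_Iic (ha : 0 ≤ a) (haω : a ≤ ω) (l : ℤ) :
    BddBelow (exPotential ω a '' Set.Iic l) := by
  refine ⟨-(ω + a) * |(l : ℝ)| - a, ?_⟩
  rintro _ ⟨k, hk, rfl⟩
  have hkl : (k : ℝ) ≤ |(l : ℝ)| := (Int.cast_le.mpr hk).trans (le_abs_self _)
  rcases (k - 1).even_or_odd with hk' | hk'
  · simp only [exPotential, hk'.neg_one_zpow]
    nlinarith [abs_nonneg (l : ℝ)]
  · simp only [exPotential, hk'.neg_one_zpow]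
    nlinarith [abs_nonneg (l : ℝ)]

end Example

/-- For `ω > a > 0`, the planar diagonal system
`u_{k+1} = e^{−ω + ak(−1)^k − a(k−1)(−1)^{k−1}} u_k`,
`v_{k+1} = e^{ω − ak(−1)^k + a(k−1)(−1)^{k−1}} v_k` does not admit an exponential
dichotomy: there are no invariant projector `P` and constants `K ≥ 1`, `0 < α < 1`
with `‖Φ(k,l)P_l‖ ≤ K α^{k−l}` for `k ≥ l` and `‖Φ(k,l)(Id − P_l)‖ ≤ K (1/α)^{k−l}`
for `k ≤ l`. -/
theorem example_no_exponential_dichotomy (ω a : ℝ) (ha : 0 < a) (haω : a < ω) :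
    ¬ HasED (exSys ω a) 1 := by
  rintro ⟨P, K, α, hED⟩
  have hA := hasDiagonalPotential_exSys ω a
  have hP : ∀ l, P l 0 0 = 1 := fun l => by
    have := hED.one_sub_apply_eq_zero_of_bddBelow hA l 0 0
      (bddBelow_exPotential_Iic ha.le haω.le l)
    rwa [Matrix.sub_apply, one_apply_eq, sub_eq_zero, eq_comm] at this
  have hbound : ∀ m : ℕ, exp (exExp ω a (2 * m)) ≤ K * α := fun m => by
    simpa [hP, exExp_eq_sub] using hED.exp_mul_abs_le_of_le hA (lt_add_one _).le 0 0
  have hlim : Tendsto (fun m : ℕ => exp (exExp ω a (2 * m))) atTop atTop := by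
    simp only [exExp_two_mul]
    exact tendsto_exp_atTop.comp (tendsto_atTop_add_const_right _ _
      (tendsto_natCast_atTop_atTop.const_mul_atTop (by positivity)))
  obtain ⟨m, hm⟩ := (hlim.eventually_gt_atTop (K * α)).exists
  exact (hbound m).not_gt hm
end

section
/- Assume x_{k+1} = A_k x_k admits a nonuniform exponential dichotomy with constants K ≥ 1, 0 < α < 1, ε ≥ 1 and invariant projector P with P_k ≠ 0 and P_k ≠ Id. Then the equation is weakly kinematically similar to a decoupled block-diagonal system x_{k+1} = diag(B¹_k, B²_k) x_k, where B¹ : ℤ → ℝ^{N₁×N₁} and B² : ℤ → ℝ^{N₂×N₂} with N₁ = rank P_k and N₂ = N − N₁; that is, the equation is reducible. -/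
open Matrix

attribute [local instance] Matrix.linftyOpNormedAddCommGroup

/-- `S : ℤ → GL(N,ℝ)` is weakly non-degenerate with respect to `ε` if
`‖S_k‖ ≤ M ε^{|k|}` and `‖S_k⁻¹‖ ≤ M ε^{|k|}` for some `M > 0`. -/
def WeaklyNonDegenerate {N : ℕ} (S : ℤ → GL (Fin N) ℝ) (ε : ℝ) : Prop :=
  ∃ M : ℝ, 0 < M ∧ ∀ k : ℤ,
    ‖(S k : Mat N)‖ ≤ M * ε ^ |k| ∧ ‖((S k)⁻¹ : Mat N)‖ ≤ M * ε ^ |k|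

/-- `x_{k+1} = A_k x_k` is weakly kinematically similar to `y_{k+1} = B_k y_k`
(with respect to `ε`) if `S_{k+1} B_k = A_k S_k` for a weakly non-degenerate `S`. -/
def WeaklyKinematicallySimilar {N : ℕ} (A B : ℤ → GL (Fin N) ℝ) (ε : ℝ) : Prop :=
  ∃ S : ℤ → GL (Fin N) ℝ, WeaklyNonDegenerate S ε ∧
    ∀ k : ℤ, (S (k + 1) : Mat N) * (B k : Mat N) = (A k : Mat N) * (S k : Mat N)

/-!
Taking `k = l` in the stable estimate gives `‖P k‖ ≤ K ε^k`, and the invariance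
`P (k+1) A k = A k P k` makes `rank P k` constant. With orthonormal bases `U k` of `im P k` and
`V k` of `im (1 - P k)`, the matrix `S k = [U k | V k]` has entries bounded by `1` and inverse
`[(U k)ᵀ P k ; (V k)ᵀ (1 - P k)]`, whose entries are `O(1 + ‖P k‖)`; it conjugates `P k` to the
constant coordinate projector `D = diag(1, 0)`. Hence `B k = (S (k+1))⁻¹ A k S k` commutes with
`D`, i.e. it is block diagonal.
-/

namespace Matrix

lemma abs_apply_le_linfty_opNorm {m n : Type*} [Fintype m] [Fintype n] [DecidableEq n]
    (A : Matrix m n ℝ) (i : m) (j : n) : |A i j| ≤ ‖A‖ :=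
  calc |A i j| = ‖(A *ᵥ Pi.single j 1) i‖ := by simp
    _ ≤ ‖A *ᵥ Pi.single j 1‖ := norm_le_pi_norm _ i
    _ ≤ ‖A‖ * ‖(Pi.single j 1 : n → ℝ)‖ := linfty_opNorm_mulVec _ _
    _ = ‖A‖ := by rw [Pi.norm_single, norm_one, mul_one]

lemma linfty_opNorm_le_card_mul_of_abs_apply_le {m n : Type*} [Fintype m] [Fintype n]
    {A : Matrix m n ℝ} {c : ℝ} (hc : 0 ≤ c) (h : ∀ i j, |A i j| ≤ c) :
    ‖A‖ ≤ Fintype.card n * c := by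
  lift c to NNReal using hc
  rw [linfty_opNorm_def]
  norm_cast
  refine Finset.sup_le fun i _ => ?_
  calc ∑ j, ‖A i j‖₊ ≤ ∑ _j : n, c := Finset.sum_le_sum fun j _ => by exact_mod_cast h i j
    _ = Fintype.card n * c := by simp

lemma linfty_opNorm_one_le {n : Type*} [Fintype n] [DecidableEq n] :
    ‖(1 : Matrix n n ℝ)‖ ≤ 1 := by
  rw [← diagonal_one, linfty_opNorm_diagonal]
  exact pi_norm_le_iff_of_nonneg zero_le_one |>.mpr fun _ => by simp

lemma abs_apply_le_one_of_transpose_mul_self_eq_one {m n : Type*} [Fintype m] [DecidableEq n]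
    {U : Matrix m n ℝ} (hU : Uᵀ * U = 1) (i : m) (j : n) : |U i j| ≤ 1 := by
  have hcol : ∑ i', U i' j * U i' j = 1 := by
    simpa [mul_apply] using congrFun₂ hU j j
  rw [← sq_le_one_iff_abs_le_one, sq, ← hcol]
  exact Finset.single_le_sum (f := fun i' => U i' j * U i' j)
    (fun _ _ => mul_self_nonneg _) (Finset.mem_univ i)

lemma abs_transpose_mul_apply_le {m n p : Type*} [Fintype m] [Fintype n] [Fintype p]
    [DecidableEq n] [DecidableEq p] {U : Matrix m n ℝ} (hU : Uᵀ * U = 1) (X : Matrix m p ℝ)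
    (a : n) (j : p) : |(Uᵀ * X) a j| ≤ Fintype.card m * ‖X‖ :=
  calc |(Uᵀ * X) a j| ≤ ‖Uᵀ * X‖ := abs_apply_le_linfty_opNorm _ a j
    _ ≤ ‖Uᵀ‖ * ‖X‖ := linfty_opNorm_mul _ _
    _ ≤ Fintype.card m * ‖X‖ := by
      gcongr
      simpa using linfty_opNorm_le_card_mul_of_abs_apply_le (A := Uᵀ) zero_le_one fun i j =>
        abs_apply_le_one_of_transpose_mul_self_eq_one hU j i

lemma rank_add_rank_one_sub_of_isIdempotentElem {n : Type*} [Fintype n] [DecidableEq n]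
    {Q : Matrix n n ℝ} (hQ : IsIdempotentElem Q) : Q.rank + (1 - Q).rank = Fintype.card n := by
  have hlin : IsIdempotentElem (toLin' Q) := hQ.map (toLinAlgEquiv' (R := ℝ) (n := n))
  have hker : LinearMap.ker (toLin' Q) = LinearMap.range (toLin' (1 - Q)) := by
    rw [LinearMap.IsIdempotentElem.ker_eq_range_one_sub hlin, map_sub, toLin'_one]
    rfl
  rw [rank, rank, ← toLin'_apply', ← toLin'_apply', ← hker,
    LinearMap.finrank_range_add_finrank_ker, Module.finrank_fintype_fun_eq_card]

lemma exists_orthonormal_cols_of_isIdempotentElem {n : Type*} [Fintype n] {Q : Matrix n n ℝ}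
    (hQ : IsIdempotentElem Q) {r : ℕ} (hr : Q.rank = r) :
    ∃ U : Matrix n (Fin r) ℝ, Q * U = U ∧ Uᵀ * U = 1 := by
  let L : (n → ℝ) ≃ₗ[ℝ] EuclideanSpace ℝ n := (WithLp.linearEquiv 2 ℝ (n → ℝ)).symm
  let W : Submodule ℝ (EuclideanSpace ℝ n) :=
    (LinearMap.range Q.mulVecLin).map (L : (n → ℝ) →ₗ[ℝ] _)
  have hW : Module.finrank ℝ W = r := hr ▸ L.finrank_map_eq _
  let b : OrthonormalBasis (Fin r) ℝ W := (stdOrthonormalBasis ℝ W).reindex (finCongr hW)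
  let v : Fin r → n → ℝ := fun c => L.symm (b c)
  have hfix : ∀ c, Q *ᵥ v c = v c := by
    intro c
    obtain ⟨x, ⟨y, hy⟩, hx⟩ := (b c).2
    rw [show v c = Q *ᵥ y by simp [v, ← hx, ← hy], mulVec_mulVec, hQ.eq]
  have hinner : ∀ c d, ∑ i, v c i * v d i = if c = d then 1 else 0 := by
    intro c d
    rw [← orthonormal_iff_ite.mp b.orthonormal c d, Submodule.coe_inner, PiLp.inner_apply]
    simp only [RCLike.inner_apply, starRingEnd_apply, star_trivial]
    exact Finset.sum_congr rfl fun i _ => mul_comm _ _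
  refine ⟨of fun i c => v c i, ?_, ?_⟩
  · ext i c
    simpa [mul_apply, mulVec, dotProduct] using congrFun (hfix c) i
  · ext c d
    simpa [mul_apply, one_apply] using hinner c d

-- The ascriptions on `Sum.elim 1 0` matter: without them the product elaborates with the
-- `CStarMatrix` default `HMul` instance and the `fromCols` lemmas no longer rewrite.
lemma exists_fromCols_conj_diagonal_of_isIdempotentElem {n : Type*} [Fintype n] [DecidableEq n]
    {P : Matrix n n ℝ} (hP : IsIdempotentElem P) {r s : ℕ} (hr : P.rank = r)
    (hs : (1 - P).rank = s) :
    ∃ (S : Matrix n (Fin r ⊕ Fin s) ℝ) (T : Matrix (Fin r ⊕ Fin s) n ℝ),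
      T * S = 1 ∧ P * S = S * diagonal (Sum.elim (1 : Fin r → ℝ) (0 : Fin s → ℝ)) ∧
        (∀ i j, |S i j| ≤ 1) ∧ ∀ i j, |T i j| ≤ Fintype.card n * (1 + ‖P‖) := by
  obtain ⟨U, hPU, hU⟩ := exists_orthonormal_cols_of_isIdempotentElem hP hr
  obtain ⟨V, hPV', hV⟩ := exists_orthonormal_cols_of_isIdempotentElem hP.one_sub hs
  have hPV : P * V = 0 := by
    rw [← hPV', ← Matrix.mul_assoc, Matrix.mul_sub, Matrix.mul_one, hP.eq, sub_self,
      Matrix.zero_mul]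
  have hPU' : (1 - P) * U = 0 := by rw [Matrix.sub_mul, Matrix.one_mul, hPU, sub_self]
  refine ⟨fromCols U V, fromRows (Uᵀ * P) (Vᵀ * (1 - P)), ?_, ?_, ?_, ?_⟩
  · rw [fromRows_mul_fromCols, Matrix.mul_assoc, Matrix.mul_assoc, Matrix.mul_assoc,
      Matrix.mul_assoc, hPU, hPV, hPU', hPV', hU, hV, Matrix.mul_zero, Matrix.mul_zero,
      fromBlocks_one]
  · rw [mul_fromCols, hPU, hPV, ← fromBlocks_diagonal, fromCols_mul_fromBlocks]
    simp
  · rintro i (a | b)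
    · exact abs_apply_le_one_of_transpose_mul_self_eq_one hU i a
    · exact abs_apply_le_one_of_transpose_mul_self_eq_one hV i b
  · have h1P : ‖1 - P‖ ≤ 1 + ‖P‖ :=
      (norm_sub_le _ _).trans (by gcongr; exact linfty_opNorm_one_le)
    rintro (a | b) j
    · exact (abs_transpose_mul_apply_le hU P a j).trans (by gcongr; linarith)
    · exact (abs_transpose_mul_apply_le hV _ b j).trans (by gcongr)

lemma exists_conj_diagonal_of_isIdempotentElem {N : ℕ} {P : Mat N} (hP : IsIdempotentElem P) :
    ∃ S : GL (Fin N) ℝ,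
      P * (S : Mat N) = S * diagonal (fun i : Fin N => if (i : ℕ) < P.rank then (1 : ℝ) else 0) ∧
      ‖(S : Mat N)‖ ≤ N ∧ ‖(S : Mat N)⁻¹‖ ≤ N ^ 2 * (1 + ‖P‖) := by
  have hsum : P.rank + (1 - P).rank = N := by
    simpa using rank_add_rank_one_sub_of_isIdempotentElem hP
  generalize hr : P.rank = r at hsum ⊢
  generalize hs : (1 - P).rank = s at hsum
  obtain ⟨S, T, hTS, hPS, hS, hT⟩ := exists_fromCols_conj_diagonal_of_isIdempotentElem hP hr hs
  let e : Fin r ⊕ Fin s ≃ Fin N := finSumFinEquiv.trans (finCongr hsum)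
  have hTS' : T.submatrix e.symm id * S.submatrix id e.symm = 1 :=
    (submatrix_mul_equiv T S e.symm (Equiv.refl _) e.symm).trans
      (by rw [hTS, submatrix_one_equiv])
  let S' : GL (Fin N) ℝ :=
    ⟨S.submatrix id e.symm, T.submatrix e.symm id, mul_eq_one_comm.mp hTS', hTS'⟩
  have hd : (fun i : Fin N => if (i : ℕ) < r then (1 : ℝ) else 0) =
      Sum.elim (1 : Fin r → ℝ) (0 : Fin s → ℝ) ∘ e.symm := by
    funext i
    obtain ⟨x, rfl⟩ := e.surjective i
    rcases x with a | b <;> simp [e]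
  refine ⟨S', ?_, ?_, ?_⟩
  · show P * S.submatrix id e.symm = S.submatrix id e.symm * _
    rw [hd, ← submatrix_diagonal_equiv, submatrix_mul_equiv, ← hPS]
    exact submatrix_mul_equiv P S id (Equiv.refl _) e.symm
  · simpa using linfty_opNorm_le_card_mul_of_abs_apply_le (A := S.submatrix id e.symm)
      zero_le_one fun i j => hS i (e.symm j)
  · rw [← coe_units_inv]
    have hT' := linfty_opNorm_le_card_mul_of_abs_apply_le (A := T.submatrix e.symm id)
      (by positivity) fun i j => hT (e.symm i) j
    simp only [Fintype.card_fin] at hT'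
    exact hT'.trans_eq (by ring)

lemma apply_eq_zero_of_commute_diagonal {n R : Type*} [Fintype n] [DecidableEq n] [CommRing R]
    [NoZeroDivisors R] {d : n → R} {B : Matrix n n R} (h : Commute (diagonal d) B) {i j : n}
    (hij : d i ≠ d j) : B i j = 0 := by
  have hentry : d i * B i j = B i j * d j := by
    simpa [diagonal_mul, mul_diagonal] using congrFun₂ h.eq i j
  have : (d i - d j) * B i j = 0 := by rw [sub_mul, hentry, mul_comm]; ring
  exact (mul_eq_zero.mp this).resolve_left (sub_ne_zero.mpr hij)

end Matrix

lemma Units.commute_inv_mul_mul {M : Type*} [Monoid M] {a p q d : M} {s t : Mˣ}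
    (ha : q * a = a * p) (hs : p * s = s * d) (ht : q * t = t * d) :
    Commute d (↑t⁻¹ * a * s) := by
  have ht' : d * ↑t⁻¹ = ↑t⁻¹ * q := by
    rw [Units.eq_inv_mul_iff_mul_eq, ← mul_assoc, ← ht, mul_assoc, Units.mul_inv, mul_one]
  calc d * (↑t⁻¹ * a * s) = ↑t⁻¹ * (q * a) * s := by
        rw [← mul_assoc, ← mul_assoc, ht', mul_assoc _ q]
    _ = ↑t⁻¹ * a * s * d := by rw [ha, mul_assoc, mul_assoc, hs, ← mul_assoc, ← mul_assoc]

lemma evolW_self {N : ℕ} (A : ℤ → GL (Fin N) ℝ) (γ : ℝ) (k : ℤ) : evolW A γ k k = 1 := by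
  simp [evolW, evol]

lemma NEDWith.norm_le {N : ℕ} {A : ℤ → GL (Fin N) ℝ} {γ : ℝ} {P : ℤ → Mat N} {K α ε : ℝ}
    (h : NEDWith A γ P K α ε) (k : ℤ) : ‖P k‖ ≤ K * ε ^ k := by
  simpa [evolW_self] using h.2.2.2.2.2.1 k k le_rfl

lemma IsInvariantProjector.rank_eq {N : ℕ} {A : ℤ → GL (Fin N) ℝ} {P : ℤ → Mat N}
    (hP : IsInvariantProjector A P) (k : ℤ) : (P k).rank = (P 0).rank := by
  have hstep : ∀ k, (P (k + 1)).rank = (P k).rank := fun k => by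
    have hdet := (isUnit_iff_isUnit_det _).mp (A k).isUnit
    rw [← rank_mul_eq_left_of_isUnit_det _ _ hdet, hP.2 k,
      rank_mul_eq_right_of_isUnit_det _ _ hdet]
  induction k using Int.induction_on with
  | zero => rfl
  | succ k ih => rw [hstep, ih]
  | pred k ih => rw [← ih, ← hstep, sub_add_cancel]

theorem reducible_of_NED_general {N : ℕ} (A : ℤ → GL (Fin N) ℝ)
    (P : ℤ → Mat N) (K α ε : ℝ) (h : NEDWith A 1 P K α ε) :
    ∃ B : ℤ → GL (Fin N) ℝ,
      WeaklyKinematicallySimilar A B ε ∧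
      ∀ (k : ℤ) (i j : Fin N),
        ¬(((i : ℕ) < (P 0).rank) ↔ ((j : ℕ) < (P 0).rank)) → (B k : Mat N) i j = 0 := by
  have hPnorm := h.norm_le
  obtain ⟨hP, hK, -, -, hε, -⟩ := h
  choose S hPS hS hSinv using fun k =>
    hP.rank_eq k ▸ Matrix.exists_conj_diagonal_of_isIdempotentElem (hP.1 k)
  refine ⟨fun k => (S (k + 1))⁻¹ * A k * S k,
    ⟨S, ⟨(N + 1) ^ 2 * (1 + K), by positivity, fun k => ?_⟩, fun k => by simp [mul_assoc]⟩,
    fun k i j hij => Matrix.apply_eq_zero_of_commute_diagonal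
      (Units.commute_inv_mul_mul (hP.2 k) (hPS k) (hPS (k + 1))) ?_⟩
  · have hC : ((N : ℝ) + 1) ^ 2 * (1 + ‖P k‖) ≤ (N + 1) ^ 2 * (1 + K) * ε ^ |k| := by
      have hεk : ε ^ k ≤ ε ^ |k| := zpow_le_zpow_right₀ hε (le_abs_self k)
      have hε1 : 1 ≤ ε ^ |k| := one_le_zpow₀ hε (abs_nonneg k)
      rw [mul_assoc]
      gcongr
      nlinarith [hPnorm k, hεk, hε1]
    constructor
    · calc ‖(S k : Mat N)‖ ≤ N := hS k
        _ ≤ (N + 1) ^ 2 * (1 + ‖P k‖) := by nlinarith [norm_nonneg (P k)]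
        _ ≤ _ := hC
    · calc ‖(S k : Mat N)⁻¹‖ ≤ N ^ 2 * (1 + ‖P k‖) := hSinv k
        _ ≤ (N + 1) ^ 2 * (1 + ‖P k‖) := by gcongr; linarith
        _ ≤ _ := hC
  · split_ifs <;> simp_all

/-- If `x_{k+1} = A_k x_k` admits a nonuniform exponential
dichotomy with invariant projector `P`, `P_k ≠ 0, Id`, then the equation is weakly
kinematically similar to a decoupled block-diagonal system
`x_{k+1} = diag(B¹_k, B²_k) x_k` with blocks of sizes `N₁ = rank P_k` and
`N₂ = N − N₁`; i.e. the equation is reducible. -/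
theorem reducible_of_NED {N : ℕ} (A : ℤ → GL (Fin N) ℝ)
    (P : ℤ → Mat N) (K α ε : ℝ) (h : NEDWith A 1 P K α ε)
    (hP : ∀ k : ℤ, P k ≠ 0 ∧ P k ≠ 1) :
    ∃ B : ℤ → GL (Fin N) ℝ,
      WeaklyKinematicallySimilar A B ε ∧
      ∀ (k : ℤ) (i j : Fin N),
        ¬(((i : ℕ) < (P 0).rank) ↔ ((j : ℕ) < (P 0).rank)) → (B k : Mat N) i j = 0 :=
  reducible_of_NED_general A P K α ε h
end
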